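/- arXiv:2207.13938 — 9 statements merged into one kernel-verified Lean document; each statement's English description precedes it below -/
import Mathlib

section
/- A meet-semilattice M is distributive if and only if the lattice Filt(M) of filters of M is a distributive lattice. -/
/-- A filter of a meet-semilattice with top: a nonempty upset closed under finite meets. -/
def IsFilter {M : Type*} [SemilatticeInf M] [OrderTop M] (F : Set M) : Prop :=
  F.Nonempty ∧ IsUpperSet F ∧ ∀ a ∈ F, ∀ b ∈ F, a ⊓ b ∈ F

/-- The filter generated by a set: the intersection of all filters containing it. -/
def filtGen {M : Type*} [SemilatticeInf M] [OrderTop M] (S : Set M) : Set M :=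
  ⋂₀ {H : Set M | IsFilter H ∧ S ⊆ H}

lemma top_mem_of_isFilter {M : Type*} [SemilatticeInf M] [OrderTop M] {F : Set M}
    (hF : IsFilter F) : ⊤ ∈ F := by
  obtain ⟨⟨a, ha⟩, hup, _⟩ := hF
  exact hup le_top ha

lemma isFilter_inter {M : Type*} [SemilatticeInf M] [OrderTop M] {F G : Set M}
    (hF : IsFilter F) (hG : IsFilter G) : IsFilter (F ∩ G) := by
  refine ⟨⟨⊤, top_mem_of_isFilter hF, top_mem_of_isFilter hG⟩, ?_, ?_⟩
  · exact hF.2.1.inter hG.2.1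
  · rintro a ⟨ha1, ha2⟩ b ⟨hb1, hb2⟩
    exact ⟨hF.2.2 a ha1 b hb1, hG.2.2 a ha2 b hb2⟩

lemma isFilter_principal {M : Type*} [SemilatticeInf M] [OrderTop M] (c : M) :
    IsFilter {x : M | c ≤ x} := by
  refine ⟨⟨c, le_refl c⟩, ?_, ?_⟩
  · intro a b hab ha; exact ha.trans hab
  · intro a ha b hb; exact le_inf ha hb

lemma filtGen_union_eq {M : Type*} [SemilatticeInf M] [OrderTop M] {G H : Set M}
    (hG : IsFilter G) (hH : IsFilter H) :
    filtGen (G ∪ H) = {x : M | ∃ g ∈ G, ∃ h ∈ H, g ⊓ h ≤ x} := by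
  have hfil : IsFilter {x : M | ∃ g ∈ G, ∃ h ∈ H, g ⊓ h ≤ x} := by
    refine ⟨⟨⊤, ⊤, top_mem_of_isFilter hG, ⊤, top_mem_of_isFilter hH, le_top⟩, ?_, ?_⟩
    · rintro a b hab ⟨g, hg, h, hh, hle⟩
      exact ⟨g, hg, h, hh, hle.trans hab⟩
    · rintro a ⟨g, hg, h, hh, hle⟩ b ⟨g', hg', h', hh', hle'⟩
      refine ⟨g ⊓ g', hG.2.2 g hg g' hg', h ⊓ h', hH.2.2 h hh h' hh', ?_⟩
      calc (g ⊓ g') ⊓ (h ⊓ h') ≤ (g ⊓ h) ⊓ (g' ⊓ h') := by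
            apply le_inf
            · exact inf_le_inf inf_le_left inf_le_left
            · exact inf_le_inf inf_le_right inf_le_right
        _ ≤ a ⊓ b := inf_le_inf hle hle'
  apply le_antisymm
  · intro x hx
    exact hx _ ⟨hfil, by
      rintro y (hy | hy)
      · exact ⟨y, hy, ⊤, top_mem_of_isFilter hH, inf_le_left⟩
      · exact ⟨⊤, top_mem_of_isFilter hG, y, hy, inf_le_right⟩⟩
  · rintro x ⟨g, hg, h, hh, hle⟩ K ⟨hK, hSK⟩
    exact hK.2.1 hle (hK.2.2 g (hSK (Or.inl hg)) h (hSK (Or.inr hh)))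

/-- A meet-semilattice `M` is distributive iff the lattice `Filt M` of filters of `M`
(where meet is intersection and join is the generated filter) is a distributive
lattice. -/
theorem distributive_iff_filt_distrib {M : Type*} [SemilatticeInf M] [OrderTop M] :
    (∀ a b c : M, a ⊓ b ≤ c → ∃ a' b' : M, a ≤ a' ∧ b ≤ b' ∧ a' ⊓ b' = c) ↔
    (∀ F G H : Set M, IsFilter F → IsFilter G → IsFilter H →
      F ∩ filtGen (G ∪ H) = filtGen ((F ∩ G) ∪ (F ∩ H))) := by
  constructor
  · intro hdist F G H hF hG hH
    rw [filtGen_union_eq hG hH, filtGen_union_eq (isFilter_inter hF hG) (isFilter_inter hF hH)]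
    ext x
    constructor
    · rintro ⟨hxF, g, hg, h, hh, hle⟩
      obtain ⟨g', h', hgg', hhh', heq⟩ := hdist g h x hle
      have hxg' : x ≤ g' := heq ▸ inf_le_left
      have hxh' : x ≤ h' := heq ▸ inf_le_right
      exact ⟨g', ⟨hF.2.1 hxg' hxF, hG.2.1 hgg' hg⟩,
        h', ⟨hF.2.1 hxh' hxF, hH.2.1 hhh' hh⟩, heq.le⟩
    · rintro ⟨g, ⟨hgF, hgG⟩, h, ⟨hhF, hhH⟩, hle⟩
      exact ⟨hF.2.1 hle (hF.2.2 g hgF h hhF), g, hgG, h, hhH, hle⟩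
  · intro hdistF a b c hle
    have h1 : c ∈ {x : M | c ≤ x} ∩ filtGen ({x : M | a ≤ x} ∪ {x : M | b ≤ x}) := by
      refine ⟨le_refl c, ?_⟩
      rw [filtGen_union_eq (isFilter_principal a) (isFilter_principal b)]
      exact ⟨a, le_refl a, b, le_refl b, hle⟩
    rw [hdistF _ _ _ (isFilter_principal c) (isFilter_principal a) (isFilter_principal b),
      filtGen_union_eq (isFilter_inter (isFilter_principal c) (isFilter_principal a))
        (isFilter_inter (isFilter_principal c) (isFilter_principal b))] at h1
    obtain ⟨g, ⟨hgc, hga⟩, h, ⟨hhc, hhb⟩, hle'⟩ := h1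
    exact ⟨g, h, hga, hhb, le_antisymm hle' (le_inf hgc hhc)⟩
end

section
/- In an algebraic frame L, every element b satisfies b = ⨅ { p : p prime, b ≤ p }, i.e., the prime elements are meet-dense in L. -/
/-- An element `p ≠ ⊤` is (meet-)prime if `x ⊓ y ≤ p` implies `x ≤ p` or `y ≤ p`. -/
def IsPrimeElt {L : Type*} [CompleteLattice L] (p : L) : Prop :=
  p ≠ ⊤ ∧ ∀ x y : L, x ⊓ y ≤ p → x ≤ p ∨ y ≤ p

/-- In an algebraic frame, the prime elements are meet-dense:
`b = ⨅ { p : p prime, b ≤ p }` for every `b`. -/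
theorem primes_meet_dense {L : Type*} [Order.Frame L]
    (halg : ∀ a : L, a = sSup {k : L | IsCompactElement k ∧ k ≤ a}) :
    ∀ b : L, b = sInf {p : L | IsPrimeElt p ∧ b ≤ p} := by
  intro b
  set a := sInf {p : L | IsPrimeElt p ∧ b ≤ p} with ha
  refine le_antisymm (le_sInf fun p hp => hp.2) ?_
  rw [halg a]
  refine sSup_le fun c hc => ?_
  obtain ⟨hck, hca⟩ := hc
  by_contra hcb
  -- Zorn: maximal m with b ≤ m, ¬ c ≤ m
  obtain ⟨m, hbm, hm⟩ := zorn_le_nonempty₀ {m : L | b ≤ m ∧ ¬ c ≤ m}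
    (fun ch hchs hch y hy => by
      refine ⟨sSup ch, ⟨le_trans (hchs hy).1 (le_sSup hy), fun hcs => ?_⟩,
        fun z hz => le_sSup hz⟩
      obtain ⟨x, hx, hcx⟩ :=
        (CompleteLattice.isCompactElement_iff_le_of_directed_sSup_le L c).mp hck ch
          ⟨y, hy⟩ hch.directedOn hcs
      exact (hchs hx).2 hcx) b ⟨le_rfl, hcb⟩
  have hmS : b ≤ m ∧ ¬ c ≤ m := hm.prop
  -- any x with x ≰ m satisfies c ≤ m ⊔ x
  have key : ∀ x : L, ¬ x ≤ m → c ≤ m ⊔ x := by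
    intro x hx
    by_contra hcx
    have : m ⊔ x ≤ m := hm.le_of_ge ⟨hmS.1.trans le_sup_left, hcx⟩ le_sup_left
    exact hx (le_sup_right.trans this)
  have hprime : IsPrimeElt m := by
    constructor
    · rintro rfl; exact hmS.2 le_top
    · intro x y hxy
      by_contra h
      push_neg at h
      have h1 := key x h.1
      have h2 := key y h.2
      have : c ≤ m ⊔ (x ⊓ y) := by
        rw [sup_inf_left]; exact le_inf h1 h2
      exact hmS.2 (this.trans (sup_le le_rfl hxy))
  exact hmS.2 ((le_sInf_iff.mp hca m ⟨hprime, hmS.1⟩))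
end

section
/- Let L be an algebraic frame in which the meet of any two compact elements is compact (an arithmetic frame). Then every pseudoprime element of L is prime, so PP(L) = P(L). -/
/-- The way-below relation. -/
def WayBelow {L : Type*} [CompleteLattice L] (a b : L) : Prop :=
  ∀ S : Set L, b ≤ sSup S → ∃ T : Finset L, ↑T ⊆ S ∧ a ≤ T.sup id

/-- An element `p ≠ ⊤` is pseudoprime if `a₁ ⊓ ⋯ ⊓ aₙ ≪ p` implies some `aᵢ ≤ p`. -/
def IsPseudoprime {L : Type*} [CompleteLattice L] (p : L) : Prop :=
  p ≠ ⊤ ∧ ∀ T : Finset L, T.Nonempty → WayBelow (T.inf id) p → ∃ a ∈ T, a ≤ p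

lemma wayBelow_le {L : Type*} [CompleteLattice L] {a b : L} (h : WayBelow a b) : a ≤ b := by
  obtain ⟨T, hT, hle⟩ := h {b} (le_sSup rfl)
  refine hle.trans (Finset.sup_le fun x hx => ?_)
  have := hT hx
  simp only [Set.mem_singleton_iff] at this
  simp [this]

lemma prime_finset_inf {L : Type*} [CompleteLattice L] {p : L} (hp : IsPrimeElt p)
    (T : Finset L) (hne : T.Nonempty) (h : T.inf id ≤ p) : ∃ a ∈ T, a ≤ p := by
  classical
  induction T using Finset.induction_on with
  | empty => exact absurd rfl hne.ne_empty
  | @insert a T ha ih =>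
    rcases T.eq_empty_or_nonempty with rfl | hT
    · simp only [Finset.inf_insert, Finset.inf_empty, id, inf_top_eq] at h
      exact ⟨_, Finset.mem_insert_self _ _, h⟩
    · rw [Finset.inf_insert] at h
      rcases hp.2 _ _ h with h1 | h2
      · exact ⟨_, Finset.mem_insert_self _ _, h1⟩
      · obtain ⟨b, hb, hbp⟩ := ih hT h2
        exact ⟨b, Finset.mem_insert_of_mem hb, hbp⟩

/-- In an arithmetic frame (an algebraic frame where the meet of two compact elements
is compact), the pseudoprime elements coincide with the prime elements. -/
theorem arithmetic_pseudoprime_eq_prime {L : Type*} [Order.Frame L]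
    (halg : ∀ a : L, a = sSup {k : L | IsCompactElement k ∧ k ≤ a})
    (harith : ∀ a b : L, IsCompactElement a →
      IsCompactElement b → IsCompactElement (a ⊓ b)) :
    {p : L | IsPseudoprime p} = {p : L | IsPrimeElt p} := by
  classical
  ext p
  simp only [Set.mem_setOf_eq]
  constructor
  · rintro ⟨hne, hpp⟩
    refine ⟨hne, fun x y hxy => ?_⟩
    by_contra hcon
    push_neg at hcon
    obtain ⟨hx, hy⟩ := hcon
    -- find compact c ≤ x with c ≰ p
    have hc : ∃ c : L, IsCompactElement c ∧ c ≤ x ∧ ¬ c ≤ p := by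
      by_contra h
      push_neg at h
      exact hx ((halg x).le.trans (sSup_le fun k hk => h k hk.1 hk.2))
    have hd : ∃ d : L, IsCompactElement d ∧ d ≤ y ∧ ¬ d ≤ p := by
      by_contra h
      push_neg at h
      exact hy ((halg y).le.trans (sSup_le fun k hk => h k hk.1 hk.2))
    obtain ⟨c, hcc, hcx, hcp⟩ := hc
    obtain ⟨d, hdc, hdy, hdp⟩ := hd
    have hcd : IsCompactElement (c ⊓ d) := harith _ _ hcc hdc
    have hcdp : c ⊓ d ≤ p := le_trans (inf_le_inf hcx hdy) hxy
    have hwb : WayBelow (({c, d} : Finset L).inf id) p := by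
      intro S hS
      have : ({c, d} : Finset L).inf id ≤ sSup S := by
        refine le_trans ?_ (hcdp.trans hS)
        simp [Finset.inf_insert]
      obtain ⟨t, ht, hle⟩ := (CompleteLattice.isCompactElement_iff_exists_le_sSup_of_le_sSup (k := _)).mp hcd S (by simpa [Finset.inf_insert] using this)
      exact ⟨t, ht, by simpa [Finset.inf_insert] using hle⟩
    obtain ⟨a, ha, hap⟩ := hpp {c, d} ⟨c, by simp⟩ hwb
    simp only [Finset.mem_insert, Finset.mem_singleton] at ha
    rcases ha with rfl | rfl
    · exact hcp hap
    · exact hdp hap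
  · rintro ⟨hne, hpr⟩
    refine ⟨hne, fun T hT hwb => ?_⟩
    exact prime_finset_inf ⟨hne, hpr⟩ T hT (wayBelow_le hwb)
end

section
/- Let L be an algebraic lattice. If a is not pseudoprime and a ≠ ⊤, then there exist compact elements k₁, …, kₙ of L and a compact element t ≤ a such that k₁ ∧ ⋯ ∧ kₙ ≤ t and kᵢ ≰ a for all i. -/
/-- In an algebraic lattice, if `a ≠ ⊤` is not pseudoprime, then there are compact
elements `k₁, …, kₙ` and a compact `t ≤ a` with `k₁ ⊓ ⋯ ⊓ kₙ ≤ t` and `kᵢ ≰ a` for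
all `i`. -/
theorem not_pseudoprime_witness {L : Type*} [CompleteLattice L]
    (halg : ∀ a : L, a = sSup {k : L | IsCompactElement k ∧ k ≤ a})
    (a : L) (hnp : ¬ IsPseudoprime a) (hne : a ≠ ⊤) :
    ∃ T : Finset L, T.Nonempty ∧
      (∀ k ∈ T, IsCompactElement k ∧ ¬ k ≤ a) ∧
      ∃ t : L, IsCompactElement t ∧ t ≤ a ∧ T.inf id ≤ t := by
  classical
  rw [IsPseudoprime, not_and] at hnp
  push_neg at hnp
  obtain ⟨T, hTne, hwb, hnle⟩ := hnp hne
  -- For each b ∈ T, pick a compact k ≤ b with ¬ k ≤ a.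
  have hpick : ∀ b ∈ T, ∃ k : L, IsCompactElement k ∧ k ≤ b ∧ ¬ k ≤ a := by
    intro b hb
    by_contra h
    push_neg at h
    apply hnle b hb
    calc b = sSup {k : L | IsCompactElement k ∧ k ≤ b} := halg b
    _ ≤ a := by
      apply sSup_le
      rintro k ⟨hk, hkb⟩
      exact h k hk hkb
  choose f hf using hpick
  refine ⟨T.attach.image (fun b => f b.1 b.2), ?_, ?_, ?_⟩
  · exact (Finset.attach_nonempty_iff.mpr hTne).image _
  · intro k hk
    simp only [Finset.mem_image, Finset.mem_attach, true_and, Subtype.exists] at hk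
    obtain ⟨b, hb, rfl⟩ := hk
    exact ⟨(hf b hb).1, (hf b hb).2.2⟩
  · -- inf of chosen compacts ≤ inf of T, which is way below a
    have hle : (T.attach.image (fun b => f b.1 b.2)).inf id ≤ T.inf id := by
      apply Finset.le_inf
      intro b hb
      calc (T.attach.image (fun b => f b.1 b.2)).inf id ≤ f b hb := by
            apply Finset.inf_le
            exact Finset.mem_image.mpr ⟨⟨b, hb⟩, Finset.mem_attach _ _, rfl⟩
      _ ≤ b := (hf b hb).2.1
    obtain ⟨F, hFsub, hFle⟩ := hwb {k : L | IsCompactElement k ∧ k ≤ a}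
      (le_of_eq (halg a))
    refine ⟨F.sup id, ?_, ?_, hle.trans hFle⟩
    · exact CompleteLattice.isCompactElement_finsetSup F (fun x hx => (hFsub hx).1)
    · exact Finset.sup_le fun x hx => (hFsub hx).2
end

section
/- Let L₁, L₂ be algebraic frames and α : L₁ → L₂ a map preserving arbitrary joins and compact elements, with right adjoint r. Suppose for every finite set S of compact elements of L₁ whose meet ⨅S is compact, α(⨅S) = ⨅ α[S]. Then for every prime element p of L₂ with r(p) ≠ ⊤, the element r(p) is pseudoprime in L₁. -/
/-- Compact element of a complete lattice (the definition Mathlib used in December 2024). -/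
def CompleteLattice.IsCompactElement {α : Type*} [CompleteLattice α] (k : α) : Prop :=
  ∀ s : Set α, k ≤ sSup s → ∃ t : Finset α, ↑t ⊆ s ∧ k ≤ t.sup id

lemma compact_finsetSup_old {L β : Type*} [CompleteLattice L] {f : β → L} (s : Finset β)
    (h : ∀ x ∈ s, CompleteLattice.IsCompactElement (f x)) :
    CompleteLattice.IsCompactElement (s.sup f) :=
  (CompleteLattice.isCompactElement_iff_exists_le_sSup_of_le_sSup _ _).mp
    (CompleteLattice.isCompactElement_finsetSup s fun x hx =>
      (CompleteLattice.isCompactElement_iff_exists_le_sSup_of_le_sSup _ _).mpr (h x hx))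

/-- A prime element detects finite infima. -/
lemma prime_finset_inf_s10 {L : Type*} [CompleteLattice L] {β : Type*} {p : L}
    (hp : IsPrimeElt p) (f : β → L) :
    ∀ S : Finset β, S.Nonempty → S.inf f ≤ p → ∃ x ∈ S, f x ≤ p := by
  classical
  intro S
  induction S using Finset.induction_on with
  | empty => rintro ⟨x, hx⟩; exact absurd hx (by simp)
  | @insert a s ha ih =>
    intro _ hle
    rw [Finset.inf_insert] at hle
    rcases hp.2 _ _ hle with h | h
    · exact ⟨a, Finset.mem_insert_self a s, h⟩
    · by_cases hs : s.Nonempty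
      · obtain ⟨x, hx, hfx⟩ := ih hs h
        exact ⟨x, Finset.mem_insert_of_mem hx, hfx⟩
      · rw [Finset.not_nonempty_iff_eq_empty.mp hs, Finset.inf_empty] at h
        exact absurd (top_le_iff.mp h) hp.1

/-- A finite join of compact elements is compact. -/
lemma compact_sup {L : Type*} [CompleteLattice L] {x y : L}
    (hx : CompleteLattice.IsCompactElement x) (hy : CompleteLattice.IsCompactElement y) :
    CompleteLattice.IsCompactElement (x ⊔ y) := by
  classical
  have h := compact_finsetSup_old (f := (id : L → L)) ({x, y} : Finset L)
    (by intro z hz; rcases Finset.mem_insert.mp hz with rfl | hz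
        · exact hx
        · rw [Finset.mem_singleton] at hz; subst hz; exact hy)
  simpa using h

/-- Let `α : L₁ → L₂` between algebraic frames preserve arbitrary joins and compact
elements, with right adjoint `r`.  If `α` preserves those finite meets of compact
elements that are compact, then for every prime `p` of `L₂` with `r p ≠ ⊤`, the
element `r p` is pseudoprime in `L₁`. -/
theorem right_adjoint_prime_pseudoprime {L₁ L₂ : Type*} [Order.Frame L₁] [Order.Frame L₂]
    (halg₁ : ∀ a : L₁, a = sSup {k : L₁ | CompleteLattice.IsCompactElement k ∧ k ≤ a})
    (halg₂ : ∀ a : L₂, a = sSup {k : L₂ | CompleteLattice.IsCompactElement k ∧ k ≤ a})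
    (α : L₁ → L₂) (r : L₂ → L₁)
    (hjoin : ∀ S : Set L₁, α (sSup S) = sSup (α '' S))
    (hcomp : ∀ k : L₁, CompleteLattice.IsCompactElement k →
      CompleteLattice.IsCompactElement (α k))
    (hadj : ∀ (a : L₁) (b : L₂), α a ≤ b ↔ a ≤ r b)
    (hS : ∀ S : Finset L₁, (∀ k ∈ S, CompleteLattice.IsCompactElement k) →
      CompleteLattice.IsCompactElement (S.inf id) → α (S.inf id) = S.inf α) :
    ∀ p : L₂, IsPrimeElt p → r p ≠ ⊤ → IsPseudoprime (r p) := by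
  classical
  intro p hp hrp
  set q := r p with hq
  have hmono : ∀ a b : L₁, a ≤ b → α a ≤ α b := fun a b h =>
    (hadj a (α b)).mpr (le_trans h ((hadj b (α b)).mp le_rfl))
  refine ⟨hrp, fun T hT hwb => ?_⟩
  by_contra hcon
  push_neg at hcon
  -- get a compact c with T.inf id ≤ c ≤ q
  obtain ⟨F, hFsub, hFle⟩ := hwb {k : L₁ | CompleteLattice.IsCompactElement k ∧ k ≤ q}
    (le_of_eq (halg₁ q))
  set c := F.sup id with hc
  have hccomp : CompleteLattice.IsCompactElement c :=
    compact_finsetSup_old F fun x hx => (hFsub hx).1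
  have hcq : c ≤ q := Finset.sup_le fun x hx => (hFsub hx).2
  -- for each a ∈ T, pick a compact k ≤ a with ¬ k ≤ q
  have hpick : ∀ a ∈ T, ∃ k : L₁, CompleteLattice.IsCompactElement k ∧ k ≤ a ∧ ¬ k ≤ q := by
    intro a ha
    by_contra h
    push_neg at h
    apply hcon a ha
    rw [halg₁ a]
    exact sSup_le fun k hk => h k hk.1 hk.2
  choose k hk1 hk2 hk3 using hpick
  -- form the finset of (k a ⊔ c)
  set T' : Finset L₁ := T.attach.image (fun a => k a.1 a.2 ⊔ c) with hT'
  have hT'comp : ∀ x ∈ T', CompleteLattice.IsCompactElement x := by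
    intro x hx
    rw [hT', Finset.mem_image] at hx
    obtain ⟨a, _, rfl⟩ := hx
    exact compact_sup (hk1 a.1 a.2) hccomp
  -- the inf of T' is c
  have hkinf : T.attach.inf (fun a => k a.1 a.2) ≤ c := by
    refine le_trans (Finset.le_inf fun b hb => ?_) hFle
    exact le_trans (Finset.inf_le (Finset.mem_attach T ⟨b, hb⟩)) (hk2 b hb)
  have hinfT' : T'.inf id = c := by
    rw [hT', Finset.inf_image]
    have : ((id : L₁ → L₁) ∘ fun a : {x // x ∈ T} => k a.1 a.2 ⊔ c)
        = fun a : {x // x ∈ T} => k a.1 a.2 ⊔ c := rfl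
    rw [this, ← Finset.inf_sup_distrib_right]
    exact le_antisymm (sup_le hkinf le_rfl) le_sup_right
  have hαc := hS T' hT'comp (hinfT' ▸ hccomp)
  rw [hinfT'] at hαc
  -- α c ≤ p
  have hαcp : α c ≤ p := (hadj c p).mpr hcq
  rw [hαc] at hαcp
  -- nonempty
  have hT'ne : T'.Nonempty := by
    obtain ⟨a, ha⟩ := hT
    exact ⟨k a ha ⊔ c, Finset.mem_image.mpr ⟨⟨a, ha⟩, Finset.mem_attach T _, rfl⟩⟩
  obtain ⟨x, hx, hxp⟩ := prime_finset_inf_s10 hp α T' hT'ne hαcp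
  rw [hT', Finset.mem_image] at hx
  obtain ⟨a, _, rfl⟩ := hx
  exact hk3 a.1 a.2 (le_trans le_sup_left ((hadj _ p).mp hxp))
end

section
/- Let L be an algebraic frame with its Stone topology generated by { ↑k : k compact } ∪ { (↑k)ᶜ : k compact }. Then the set PP(L) ∪ {⊤} of pseudoprime elements together with the top element is a closed subset of L. -/
/-- The Stone topology on an algebraic frame, generated by the subbasis
`{ ↑k : k compact } ∪ { (↑k)ᶜ : k compact }`. -/
def stoneTop (L : Type*) [CompleteLattice L] : TopologicalSpace L :=
  TopologicalSpace.generateFrom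
    ({U : Set L | ∃ k : L, IsCompactElement k ∧ U = Set.Ici k} ∪
     {U : Set L | ∃ k : L, IsCompactElement k ∧ U = (Set.Ici k)ᶜ})

/-- If `a ≤ k ≤ b` with `k` compact, then `a ≪ b`. -/
lemma wayBelow_of_compact_btwn {L : Type*} [CompleteLattice L] {a k b : L}
    (hk : IsCompactElement k) (hak : a ≤ k) (hkb : k ≤ b) :
    WayBelow a b := by
  intro S hS
  obtain ⟨T, hTS, hT⟩ := (CompleteLattice.isCompactElement_iff_exists_le_sSup_of_le_sSup L k).mp hk S (hkb.trans hS)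
  exact ⟨T, hTS, hak.trans hT⟩

/-- In an algebraic frame with its Stone topology, the set of pseudoprime elements
together with the top element is closed. -/
theorem pseudoprimes_union_top_closed {L : Type*} [Order.Frame L]
    (halg : ∀ a : L, a = sSup {k : L | IsCompactElement k ∧ k ≤ a}) :
    @IsClosed L (stoneTop L) ({p : L | IsPseudoprime p} ∪ {(⊤ : L)}) := by
  classical
  letI : TopologicalSpace L := stoneTop L
  rw [← isOpen_compl_iff, isOpen_iff_forall_mem_open]
  intro p hp
  simp only [Set.mem_compl_iff, Set.mem_union, Set.mem_setOf_eq, Set.mem_singleton_iff,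
    not_or] at hp
  obtain ⟨hpp, hptop⟩ := hp
  rw [IsPseudoprime, not_and_or] at hpp
  rcases hpp with h | h
  · exact absurd (not_not.mp h) hptop
  push_neg at h
  obtain ⟨T, hTne, hwb, hnle⟩ := h
  -- from way-below, get a compact k with inf T ≤ k ≤ p
  obtain ⟨F, hFS, hF⟩ := hwb {k : L | IsCompactElement k ∧ k ≤ p}
    (le_of_eq (halg p))
  set k := F.sup id with hkdef
  have hkcomp : IsCompactElement k :=
    CompleteLattice.isCompactElement_finsetSup F (fun x hx => (hFS hx).1)
  have hkp : k ≤ p := Finset.sup_le fun x hx => (hFS hx).2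
  -- for each a in T, get compact c a ≤ a with c a ≰ p
  have hc : ∀ a ∈ T, ∃ c : L, IsCompactElement c ∧ c ≤ a ∧ ¬ c ≤ p := by
    intro a ha
    by_contra hcon
    push_neg at hcon
    refine hnle a ha ?_
    calc a = sSup {c : L | IsCompactElement c ∧ c ≤ a} := halg a
    _ ≤ p := sSup_le fun c ⟨hc1, hc2⟩ => hcon c hc1 hc2
  choose! c hccomp hcle hcnle using hc
  -- the open neighborhood
  refine ⟨Set.Ici k ∩ ⋂ a ∈ T, (Set.Ici (c a))ᶜ, ?_, ?_, ?_, ?_⟩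
  · -- subset of complement
    intro q hq
    obtain ⟨hq1, hq2⟩ := hq
    simp only [Set.mem_iInter, Set.mem_compl_iff, Set.mem_Ici] at hq2
    simp only [Set.mem_compl_iff, Set.mem_union, Set.mem_setOf_eq, Set.mem_singleton_iff,
      not_or]
    obtain ⟨a0, ha0⟩ := id hTne
    have hqtop : q ≠ ⊤ := by
      intro hq
      exact hq2 a0 ha0 (hq ▸ le_top)
    constructor
    · rintro ⟨-, hps⟩
      obtain ⟨b, hbT, hbq⟩ := hps (T.image c) (Finset.Nonempty.image hTne c) (by
        refine wayBelow_of_compact_btwn hkcomp ?_ hq1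
        refine le_trans ?_ hF
        exact Finset.le_inf fun a ha =>
          Finset.inf_le_of_le (Finset.mem_image_of_mem c ha) (hcle a ha))
      obtain ⟨a', ha', rfl⟩ := Finset.mem_image.mp hbT
      exact hq2 a' ha' hbq
    · exact hqtop
  · -- open
    apply IsOpen.inter
    · exact TopologicalSpace.GenerateOpen.basic _ (Or.inl ⟨k, hkcomp, rfl⟩)
    · exact isOpen_biInter_finset fun a ha =>
        TopologicalSpace.GenerateOpen.basic _ (Or.inr ⟨c a, hccomp a ha, rfl⟩)
  · -- p ∈ Ici k
    exact hkp
  · -- p in the intersection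
    simp only [Set.mem_iInter, Set.mem_compl_iff, Set.mem_Ici]
    exact fun a ha => hcnle a ha
end

section
/- Let L be an algebraic frame with its Stone topology, and let P(L) be its set of prime elements, Y_L = PP(L) ∪ {⊤} the set of pseudoprimes together with top. Then P(L) is topologically dense in PP(L): every nonempty basic open set ↑k ∩ (↑l₁)ᶜ ∩ ⋯ ∩ (↑lₙ)ᶜ (k, lᵢ compact) meeting PP(L) also meets P(L). -/
/-- In an algebraic frame, the primes are dense among the pseudoprimes: every basic
open set `↑k ∩ (↑l₁)ᶜ ∩ ⋯ ∩ (↑lₙ)ᶜ` (with `k`, `lᵢ` compact) that contains a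
pseudoprime also contains a prime. -/
theorem primes_dense_in_pseudoprimes {L : Type*} [Order.Frame L]
    (halg : ∀ a : L, a = sSup {k : L | IsCompactElement k ∧ k ≤ a})
    (k : L) (T : Finset L)
    (hk : IsCompactElement k)
    (hT : ∀ l ∈ T, IsCompactElement l)
    (q : L) (hq : IsPseudoprime q) (hkq : k ≤ q) (hTq : ∀ l ∈ T, ¬ l ≤ q) :
    ∃ p : L, IsPrimeElt p ∧ k ≤ p ∧ ∀ l ∈ T, ¬ l ≤ p := by
  classical
  set a : L := T.inf id with ha
  by_cases hak : a ≤ k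
  · -- This case is impossible.
    exfalso
    rcases T.eq_empty_or_nonempty with rfl | hTne
    · -- `a = ⊤`, hence `k = ⊤`, hence `q = ⊤`, contradicting pseudoprimality.
      have hatop : a = ⊤ := by simp [ha]
      exact hq.1 (top_unique ((hatop ▸ hak).trans hkq))
    · -- `a ≤ k ≤ q` with `k` compact, so `a` is way below `q`.
      have hwb : WayBelow a q := by
        intro S hS
        obtain ⟨F, hFS, hkF⟩ := (CompleteLattice.isCompactElement_iff_exists_le_sSup_of_le_sSup L k).mp hk S (hkq.trans hS)
        exact ⟨F, hFS, hak.trans hkF⟩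
      obtain ⟨l, hl, hlq⟩ := hq.2 T hTne hwb
      exact hTq l hl hlq
  · -- `a ≰ k`: pick a compact `c ≤ a` with `c ≰ k`.
    have hc : ∃ c : L, IsCompactElement c ∧ c ≤ a ∧ ¬ c ≤ k := by
      by_contra hcon
      push_neg at hcon
      apply hak
      calc a = sSup {c : L | IsCompactElement c ∧ c ≤ a} := halg a
        _ ≤ k := sSup_le fun c hcmem => hcon c hcmem.1 hcmem.2
    obtain ⟨c, hcc, hca, hck⟩ := hc
    -- Zorn: a maximal element `p` with `k ≤ p` and `c ≰ p`.
    obtain ⟨p, hkp, hpmem, hpmax⟩ :=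
      zorn_le_nonempty₀ {x : L | k ≤ x ∧ ¬ c ≤ x} (fun C hCs hchain y hy => by
        refine ⟨sSup C, ⟨(hCs hy).1.trans (le_sSup hy), fun hcsup => ?_⟩,
          fun z hz => le_sSup hz⟩
        obtain ⟨x, hxC, hcx⟩ :=
          (CompleteLattice.isCompactElement_iff_le_of_directed_sSup_le L c).mp hcc C
            ⟨y, hy⟩ (IsChain.directedOn hchain) hcsup
        exact (hCs hxC).2 hcx) k ⟨le_rfl, hck⟩
    obtain ⟨hkp', hcp⟩ := hpmem
    -- `p` is prime.
    have hprime : IsPrimeElt p := by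
      constructor
      · intro htop
        exact hcp (htop ▸ le_top)
      · intro x y hxy
        by_contra hcon
        push_neg at hcon
        obtain ⟨hx, hy⟩ := hcon
        have h1 : c ≤ p ⊔ x := by
          by_contra h1
          exact hx (le_sup_right.trans (hpmax ⟨hkp'.trans le_sup_left, h1⟩ le_sup_left))
        have h2 : c ≤ p ⊔ y := by
          by_contra h2
          exact hy (le_sup_right.trans (hpmax ⟨hkp'.trans le_sup_left, h2⟩ le_sup_left))
        have h3 : c ≤ p ⊔ (x ⊓ y) := by
          have : c ≤ (p ⊔ x) ⊓ (p ⊔ y) := le_inf h1 h2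
          rwa [← sup_inf_left] at this
        exact hcp (h3.trans (sup_le le_rfl hxy))
    refine ⟨p, hprime, hkp', fun l hl hlp => ?_⟩
    exact hcp ((hca.trans (Finset.inf_le hl : a ≤ id l)).trans hlp)
end

section
/- In a Stone frame (compact zero-dimensional frame), any two distinct prime elements are incomparable; more precisely, if p, q are prime with p ≤ q, then p = q. -/
/-- The pseudocomplement `a* = ⨆ {x : a ⊓ x = ⊥}`. -/
def pcompl {L : Type*} [CompleteLattice L] (a : L) : L :=
  sSup {x : L | a ⊓ x = ⊥}

/-- `a` is complemented if `a ⊔ a* = ⊤`. -/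
def IsComplementedElt {L : Type*} [CompleteLattice L] (a : L) : Prop :=
  a ⊔ pcompl a = ⊤

/-- In a Stone frame (compact zero-dimensional frame), distinct prime elements are
incomparable: if `p ≤ q` are prime, then `p = q`. -/
theorem stoneFrame_primes_incomparable {L : Type*} [Order.Frame L]
    (hcompact : IsCompactElement (⊤ : L))
    (hzd : ∀ a : L, a = sSup {x : L | IsComplementedElt x ∧ x ≤ a})
    (p q : L) (hp : IsPrimeElt p) (hq : IsPrimeElt q) (hpq : p ≤ q) : p = q := by
  refine le_antisymm hpq ?_
  conv_lhs => rw [hzd q]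
  refine sSup_le fun x hx => ?_
  obtain ⟨hxc, hxq⟩ := hx
  have hinf : x ⊓ pcompl x = ⊥ := by
    rw [pcompl, inf_sSup_eq]
    exact le_bot_iff.mp (iSup₂_le fun i hi => hi.le)
  rcases hp.2 x (pcompl x) (hinf.le.trans bot_le) with h | h
  · exact h
  · exact absurd (top_le_iff.mp (hxc ▸ sup_le hxq (h.trans hpq))) hq.1
end

section
/- Let M₁, M₂ be distributive meet-semilattices and α : M₁ → M₂ a meet-semilattice homomorphism such that for every finite S ⊆ M₁ and every upper bound x of α[S] there is an upper bound c of S with α(c) ≤ x. Then α preserves all existing finite joins: if S ⊆ M₁ is finite and ⨆S exists in M₁, then ⨆α[S] exists in M₂ and equals α(⨆S). -/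
/-- Let `M₁`, `M₂` be distributive meet-semilattices (with top) and `α : M₁ → M₂` a
meet-semilattice homomorphism such that for every finite `S ⊆ M₁` and every upper
bound `x` of `α[S]` there is an upper bound `c` of `S` with `α c ≤ x`.  Then `α`
preserves all existing finite joins: if `S` is finite and has a least upper bound `a`
in `M₁`, then `α a` is the least upper bound of `α[S]` in `M₂`. -/
theorem preserves_existing_finite_joins {M₁ M₂ : Type*}
    [SemilatticeInf M₁] [OrderTop M₁] [SemilatticeInf M₂] [OrderTop M₂]
    (hd₁ : ∀ a b c : M₁, a ⊓ b ≤ c → ∃ a' b' : M₁, a ≤ a' ∧ b ≤ b' ∧ a' ⊓ b' = c)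
    (hd₂ : ∀ a b c : M₂, a ⊓ b ≤ c → ∃ a' b' : M₂, a ≤ a' ∧ b ≤ b' ∧ a' ⊓ b' = c)
    (α : M₁ → M₂)
    (hinf : ∀ a b : M₁, α (a ⊓ b) = α a ⊓ α b)
    (htop : α ⊤ = ⊤)
    (hub : ∀ S : Finset M₁, ∀ x : M₂, (∀ s ∈ S, α s ≤ x) →
      ∃ c : M₁, (∀ s ∈ S, s ≤ c) ∧ α c ≤ x) :
    ∀ (S : Finset M₁) (a : M₁), IsLUB (↑S : Set M₁) a →
      IsLUB (α '' (↑S : Set M₁)) (α a) := by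
  have hmono : ∀ x y : M₁, x ≤ y → α x ≤ α y := by
    intro x y h
    have : α (x ⊓ y) = α x ⊓ α y := hinf x y
    rw [inf_eq_left.mpr h] at this
    rw [this]; exact inf_le_right
  intro S a hS
  constructor
  · rintro _ ⟨s, hs, rfl⟩
    exact hmono _ _ (hS.1 hs)
  · intro x hx
    obtain ⟨c, hc, hcx⟩ := hub S x (fun s hs => hx ⟨s, hs, rfl⟩)
    exact le_trans (hmono _ _ (hS.2 hc)) hcx
end
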